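/- Let φ : B → A be an L-homomorphism between L-structures, n ∈ ℕ, and for i = 1, 2, 3, 4 let F_i^B (resp. F_i^A) be maps from n-tuples of reflexive admissible binary relations on B (resp. A) to reflexive admissible binary relations on B (resp. A), satisfying the homomorphism property: φ(F_i^B(R̄)) ⊆ F_i^A(φ(R̄)) for every n-tuple R̄ of reflexive admissible relations on B, where φ(R̄) denotes the tuple (φ(R_1), …, φ(R_n)). Then for every such tuple R̄, φ(K(F_1^B(R̄), F_2^B(R̄); F_3^B(R̄); F_4^B(R̄))) ⊆ K(F_1^A(φ(R̄)), F_2^A(φ(R̄)); F_3^A(φ(R̄)); F_4^A(φ(R̄))). -/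
import Mathlib


open FirstOrder FirstOrder.Language

/-- A binary relation is admissible if it is preserved by all function symbols. -/
def Admissible (L : FirstOrder.Language) {A : Type*} [L.Structure A]
    (R : A → A → Prop) : Prop :=
  ∀ ⦃n : ℕ⦄ (f : L.Functions n) (a b : Fin n → A),
    (∀ i, R (a i) (b i)) → R (Structure.funMap f a) (Structure.funMap f b)

/-- `cl L P` is the smallest reflexive admissible relation containing `P`. -/
def cl (L : FirstOrder.Language) {A : Type*} [L.Structure A]
    (P : A → A → Prop) : A → A → Prop :=
  fun a b => ∀ R : A → A → Prop, Reflexive R → Admissible L R →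
    (∀ x y, P x y → R x y) → R a b

/-- For a homomorphism `φ : B → A`, `rmap L φ R` is the reflexive admissible
relation on `A` generated by the image of `R` under `φ`. -/
def rmap (L : FirstOrder.Language) {A B : Type*} [L.Structure A] [L.Structure B]
    (φ : B →[L] A) (R : B → B → Prop) : A → A → Prop :=
  cl L (fun x y => ∃ u v, R u v ∧ φ u = x ∧ φ v = y)

/-- `t` is a Mal'cev term modulo `F` and `G` on `A`. -/
def MalcevModulo (L : FirstOrder.Language) {A : Type*} [L.Structure A]
    (F G : (A → A → Prop) → (A → A → Prop)) (t : L.Term (Fin 3)) : Prop :=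
  ∀ R : A → A → Prop, Reflexive R → Admissible L R → ∀ a b, R a b →
    F R a (t.realize ![a, b, b]) ∧ G R (t.realize ![a, a, b]) b

/-- The operator `K(R, S; U; T)`. -/
def K4 (L : FirstOrder.Language) {A : Type*} [L.Structure A]
    (R S U T : A → A → Prop) : A → A → Prop :=
  fun z w => ∃ (h k : ℕ) (t : L.Term (Fin h ⊕ Fin k))
    (a a' : Fin h → A) (b b' : Fin k → A),
    (∀ i, R (a i) (a' i)) ∧ (∀ j, S (b j) (b' j)) ∧
    z = t.realize (Sum.elim a' b) ∧ w = t.realize (Sum.elim a' b') ∧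
    U (t.realize (Sum.elim a b)) (t.realize (Sum.elim a' b)) ∧
    T (t.realize (Sum.elim a b)) (t.realize (Sum.elim a b'))

/-- The operator `K(R, S; T)`. -/
def K3 (L : FirstOrder.Language) {A : Type*} [L.Structure A]
    (R S T : A → A → Prop) : A → A → Prop :=
  fun z w => ∃ (h k : ℕ) (t : L.Term (Fin h ⊕ Fin k))
    (a a' : Fin h → A) (b b' : Fin k → A),
    (∀ i, R (a i) (a' i)) ∧ (∀ j, S (b j) (b' j)) ∧
    z = t.realize (Sum.elim a' b) ∧ w = t.realize (Sum.elim a' b') ∧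
    T (t.realize (Sum.elim a b)) (t.realize (Sum.elim a b'))

section Aux

variable {L : FirstOrder.Language} {A B : Type*} [L.Structure A] [L.Structure B]

lemma cl_refl (P : A → A → Prop) : Reflexive (cl L P) :=
  fun a R hR _ _ => hR a

lemma cl_adm (P : A → A → Prop) : Admissible L (cl L P) :=
  fun _ f a b hab R hr hadm hP => hadm f a b (fun i => hab i R hr hadm hP)

lemma cl_base {P : A → A → Prop} {x y : A} (h : P x y) : cl L P x y :=
  fun _ _ _ hP => hP x y h

lemma rmap_base (φ : B →[L] A) {R : B → B → Prop} {u v : B} (h : R u v) :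
    rmap L φ R (φ u) (φ v) :=
  cl_base ⟨u, v, h, rfl, rfl⟩

lemma K4_refl {R S U T : A → A → Prop} (hR : Reflexive R) (hU : Reflexive U)
    (hT : Reflexive T) : Reflexive (K4 L R S U T) := by
  intro x
  refine ⟨1, 0, Term.var (Sum.inl 0), (fun _ => x), (fun _ => x), Fin.elim0, Fin.elim0,
    fun _ => hR x, fun j => j.elim0, ?_, ?_, ?_, ?_⟩ <;>
    simp [Term.realize, hU x, hT x]

lemma K4_adm {R S U T : A → A → Prop} (hU : Admissible L U) (hT : Admissible L T) :
    Admissible L (K4 L R S U T) := by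
  intro m f z w hzw
  choose h k t a a' b b' hR hS hz hw hU' hT' using hzw
  let eH : Fin (Fintype.card ((i : Fin m) × Fin (h i))) ≃ (i : Fin m) × Fin (h i) :=
    (Fintype.equivFin _).symm
  let eK : Fin (Fintype.card ((i : Fin m) × Fin (k i))) ≃ (i : Fin m) × Fin (k i) :=
    (Fintype.equivFin _).symm
  let t0 : L.Term (Fin (Fintype.card ((i : Fin m) × Fin (h i))) ⊕
      Fin (Fintype.card ((i : Fin m) × Fin (k i)))) :=
    Term.func f (fun i => (t i).relabel
      (Sum.map (fun x => eH.symm ⟨i, x⟩) (fun y => eK.symm ⟨i, y⟩)))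
  have key : ∀ (α : (i : Fin m) → Fin (h i) → A) (β : (i : Fin m) → Fin (k i) → A),
      t0.realize (Sum.elim (fun p => α (eH p).1 (eH p).2) (fun q => β (eK q).1 (eK q).2))
        = Structure.funMap f (fun i => (t i).realize (Sum.elim (α i) (β i))) := by
    intro α β
    simp only [t0, Term.realize, Term.realize_relabel]
    congr 1
    funext i
    congr 1
    funext x
    cases x with
    | inl x =>
      simp only [Function.comp_apply, Sum.map_inl, Sum.elim_inl]
      rw [Equiv.apply_symm_apply]
    | inr y =>
      simp only [Function.comp_apply, Sum.map_inr, Sum.elim_inr]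
      rw [Equiv.apply_symm_apply]
  refine ⟨_, _, t0, (fun p => a (eH p).1 (eH p).2), (fun p => a' (eH p).1 (eH p).2),
    (fun q => b (eK q).1 (eK q).2), (fun q => b' (eK q).1 (eK q).2),
    fun p => hR _ _, fun q => hS _ _, ?_, ?_, ?_, ?_⟩
  · rw [key a' b]; exact congrArg _ (funext fun i => hz i)
  · rw [key a' b']; exact congrArg _ (funext fun i => hw i)
  · rw [key a b, key a' b]; exact hU f _ _ hU'
  · rw [key a b, key a b']; exact hT f _ _ hT'

lemma K4_image (φ : B →[L] A) {R S U T : B → B → Prop} {R' S' U' T' : A → A → Prop}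
    (hR : ∀ u v, R u v → R' (φ u) (φ v)) (hS : ∀ u v, S u v → S' (φ u) (φ v))
    (hU : ∀ u v, U u v → U' (φ u) (φ v)) (hT : ∀ u v, T u v → T' (φ u) (φ v))
    {u v : B} (huv : K4 L R S U T u v) : K4 L R' S' U' T' (φ u) (φ v) := by
  obtain ⟨h, k, t, a, a', b, b', hR0, hS0, hz, hw, hU0, hT0⟩ := huv
  refine ⟨h, k, t, φ ∘ a, φ ∘ a', φ ∘ b, φ ∘ b',
    fun i => hR _ _ (hR0 i), fun j => hS _ _ (hS0 j), ?_, ?_, ?_, ?_⟩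
  · rw [hz, ← HomClass.realize_term φ]; congr 1; funext x; cases x <;> rfl
  · rw [hw, ← HomClass.realize_term φ]; congr 1; funext x; cases x <;> rfl
  · have := hU _ _ hU0
    rw [← HomClass.realize_term φ, ← HomClass.realize_term φ] at this
    convert this using 2 <;> (funext x; cases x <;> rfl)
  · have := hT _ _ hT0
    rw [← HomClass.realize_term φ, ← HomClass.realize_term φ] at this
    convert this using 2 <;> (funext x; cases x <;> rfl)

end Aux

/-- the homomorphism property passes to `K(F₁, F₂; F₃; F₄)`. -/
theorem stmt11 {L : FirstOrder.Language} {A B : Type*} [L.Structure A] [L.Structure B]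
    (φ : B →[L] A) (n : ℕ)
    (F1B F2B F3B F4B : (Fin n → (B → B → Prop)) → (B → B → Prop))
    (F1A F2A F3A F4A : (Fin n → (A → A → Prop)) → (A → A → Prop))
    (hFB1 : ∀ Rs : Fin n → (B → B → Prop),
      (∀ j, Reflexive (Rs j)) → (∀ j, Admissible L (Rs j)) →
      Reflexive (F1B Rs) ∧ Admissible L (F1B Rs))
    (hFB2 : ∀ Rs : Fin n → (B → B → Prop),
      (∀ j, Reflexive (Rs j)) → (∀ j, Admissible L (Rs j)) →
      Reflexive (F2B Rs) ∧ Admissible L (F2B Rs))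
    (hFB3 : ∀ Rs : Fin n → (B → B → Prop),
      (∀ j, Reflexive (Rs j)) → (∀ j, Admissible L (Rs j)) →
      Reflexive (F3B Rs) ∧ Admissible L (F3B Rs))
    (hFB4 : ∀ Rs : Fin n → (B → B → Prop),
      (∀ j, Reflexive (Rs j)) → (∀ j, Admissible L (Rs j)) →
      Reflexive (F4B Rs) ∧ Admissible L (F4B Rs))
    (hFA1 : ∀ Ss : Fin n → (A → A → Prop),
      (∀ j, Reflexive (Ss j)) → (∀ j, Admissible L (Ss j)) →
      Reflexive (F1A Ss) ∧ Admissible L (F1A Ss))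
    (hFA2 : ∀ Ss : Fin n → (A → A → Prop),
      (∀ j, Reflexive (Ss j)) → (∀ j, Admissible L (Ss j)) →
      Reflexive (F2A Ss) ∧ Admissible L (F2A Ss))
    (hFA3 : ∀ Ss : Fin n → (A → A → Prop),
      (∀ j, Reflexive (Ss j)) → (∀ j, Admissible L (Ss j)) →
      Reflexive (F3A Ss) ∧ Admissible L (F3A Ss))
    (hFA4 : ∀ Ss : Fin n → (A → A → Prop),
      (∀ j, Reflexive (Ss j)) → (∀ j, Admissible L (Ss j)) →
      Reflexive (F4A Ss) ∧ Admissible L (F4A Ss))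
    (h1 : ∀ Rs : Fin n → (B → B → Prop),
      (∀ j, Reflexive (Rs j)) → (∀ j, Admissible L (Rs j)) →
      ∀ a b, rmap L φ (F1B Rs) a b → F1A (fun j => rmap L φ (Rs j)) a b)
    (h2 : ∀ Rs : Fin n → (B → B → Prop),
      (∀ j, Reflexive (Rs j)) → (∀ j, Admissible L (Rs j)) →
      ∀ a b, rmap L φ (F2B Rs) a b → F2A (fun j => rmap L φ (Rs j)) a b)
    (h3 : ∀ Rs : Fin n → (B → B → Prop),
      (∀ j, Reflexive (Rs j)) → (∀ j, Admissible L (Rs j)) →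
      ∀ a b, rmap L φ (F3B Rs) a b → F3A (fun j => rmap L φ (Rs j)) a b)
    (h4 : ∀ Rs : Fin n → (B → B → Prop),
      (∀ j, Reflexive (Rs j)) → (∀ j, Admissible L (Rs j)) →
      ∀ a b, rmap L φ (F4B Rs) a b → F4A (fun j => rmap L φ (Rs j)) a b)
    (Rs : Fin n → (B → B → Prop))
    (hr : ∀ j, Reflexive (Rs j)) (ha : ∀ j, Admissible L (Rs j)) :
    ∀ a b : A, rmap L φ (K4 L (F1B Rs) (F2B Rs) (F3B Rs) (F4B Rs)) a b →
      K4 L (F1A (fun j => rmap L φ (Rs j))) (F2A (fun j => rmap L φ (Rs j)))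
        (F3A (fun j => rmap L φ (Rs j))) (F4A (fun j => rmap L φ (Rs j))) a b := by
  intro a b hab
  set Ss : Fin n → (A → A → Prop) := fun j => rmap L φ (Rs j) with hSs
  have hSr : ∀ j, Reflexive (Ss j) := fun j => cl_refl _
  have hSa : ∀ j, Admissible L (Ss j) := fun j => cl_adm _
  refine hab (K4 L (F1A Ss) (F2A Ss) (F3A Ss) (F4A Ss))
    (K4_refl (hFA1 Ss hSr hSa).1 (hFA3 Ss hSr hSa).1 (hFA4 Ss hSr hSa).1)
    (K4_adm (hFA3 Ss hSr hSa).2 (hFA4 Ss hSr hSa).2) ?_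
  rintro x y ⟨u, v, huv, rfl, rfl⟩
  exact K4_image φ
    (fun u v h => h1 Rs hr ha _ _ (rmap_base φ h))
    (fun u v h => h2 Rs hr ha _ _ (rmap_base φ h))
    (fun u v h => h3 Rs hr ha _ _ (rmap_base φ h))
    (fun u v h => h4 Rs hr ha _ _ (rmap_base φ h)) huv
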